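/- For every complex number q with |q| < 1, the following identity holds: Σ_{n≥0} q^{2n} · (q^{4n+4}; q^4)_∞ · (q; q)_{2n+1} = 2(1−q)(q^4; q^4)_∞/(1+q^3) − (q; q)_∞/(1+q^3). -/

import Mathlib

/-- The finite q-Pochhammer symbol `(a; q)_n = ∏_{j=0}^{n-1} (1 - a q^j)`. -/
noncomputable def qPoch (a q : ℂ) (n : ℕ) : ℂ := ∏ j ∈ Finset.range n, (1 - a * q ^ j)

/-- The infinite q-Pochhammer symbol `(a; q)_∞ = ∏_{j=0}^{∞} (1 - a q^j)`. -/
noncomputable def qPochInf (a q : ℂ) : ℂ := ∏' j : ℕ, (1 - a * q ^ j)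

/-! Write `T n = (q^{4n+4}; q^4)_∞ (q; q)_{2n+1}`. Since `1 - q^{4n+4} = (1 - q^{2n+2})(1 + q^{2n+2})`,
the terms satisfy `(1 + q^{2n+2}) T (n+1) = (1 - q^{2n+3}) T n`, so with `F n = (1 + q^{2n}) T n`
the summand times `1 + q^3` is `F n - F (n+1)`. The series therefore telescopes to
`F 0 - lim F = 2 (1 - q) (q^4; q^4)_∞ - (q; q)_∞`, using that the tails `(q^{4n+4}; q^4)_∞` tend to 1. -/

open Filter Topology Finset Asymptotics

lemma norm_pow_lt_one {R : Type*} [SeminormedRing R] {x : R} (hx : ‖x‖ < 1) {k : ℕ}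
    (hk : k ≠ 0) : ‖x ^ k‖ < 1 :=
  (norm_pow_le' x (Nat.pos_of_ne_zero hk)).trans_lt (pow_lt_one₀ (norm_nonneg x) hx hk)

lemma summable_pow_mul_of_tendsto {R : Type*} [NormedRing R] [CompleteSpace R] {r : R}
    (hr : ‖r‖ < 1) {T : ℕ → R} {L : R} (hT : Tendsto T atTop (𝓝 L)) :
    Summable fun n => r ^ n * T n :=
  summable_of_isBigO_nat (summable_norm_geometric_of_norm_lt_one hr) <| by
    simpa using ((isBigO_refl (fun n => r ^ n) atTop).norm_right.mul (hT.isBigO_one ℝ))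

lemma Summable.hasSum_of_eq_sub_succ {G : Type*} [AddCommGroup G] [TopologicalSpace G]
    [IsTopologicalAddGroup G] [T2Space G] {f F : ℕ → G} {L : G} (hf : Summable f)
    (htel : ∀ n, f n = F n - F (n + 1)) (hF : Tendsto F atTop (𝓝 L)) : HasSum f (F 0 - L) := by
  convert hf.hasSum
  refine tendsto_nhds_unique ?_ hf.hasSum.tendsto_sum_nat
  simpa only [htel, sum_range_sub'] using tendsto_const_nhds.sub hF

section QPochhammer

variable {a q : ℂ}

lemma one_sub_mul_pow_ne_zero (ha : ‖a‖ < 1) (hq : ‖q‖ ≤ 1) (j : ℕ) : 1 - a * q ^ j ≠ 0 := by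
  have : ‖a * q ^ j‖ < 1 := by
    rw [norm_mul, norm_pow]
    exact (mul_le_of_le_one_right (norm_nonneg a) (pow_le_one₀ (norm_nonneg q) hq)).trans_lt ha
  intro h
  rw [← eq_of_sub_eq_zero h, norm_one] at this
  exact lt_irrefl 1 this

lemma summable_norm_mul_pow (hq : ‖q‖ < 1) : Summable fun j : ℕ => ‖a * q ^ j‖ := by
  simpa only [norm_mul, norm_pow] using
    (summable_geometric_of_lt_one (norm_nonneg q) hq).mul_left ‖a‖

lemma multipliable_one_sub_mul_pow (hq : ‖q‖ < 1) : Multipliable fun j : ℕ => 1 - a * q ^ j := by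
  simpa only [sub_eq_add_neg] using
    multipliable_one_add_of_summable (by simpa only [norm_neg] using summable_norm_mul_pow hq)

lemma qPochInf_ne_zero (ha : ‖a‖ < 1) (hq : ‖q‖ < 1) : qPochInf a q ≠ 0 := by
  simpa only [qPochInf, sub_eq_add_neg] using
    tprod_one_add_ne_zero_of_summable
      (fun j => by simpa only [← sub_eq_add_neg] using one_sub_mul_pow_ne_zero ha hq.le j)
      (by simpa only [norm_neg] using summable_norm_mul_pow hq)

lemma qPoch_succ (a q : ℂ) (n : ℕ) : qPoch a q (n + 1) = qPoch a q n * (1 - a * q ^ n) :=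
  prod_range_succ _ n

lemma tendsto_qPoch (hq : ‖q‖ < 1) : Tendsto (qPoch a q) atTop (𝓝 (qPochInf a q)) :=
  (multipliable_one_sub_mul_pow hq).hasProd.tendsto_prod_nat

lemma qPoch_mul_qPochInf (hq : ‖q‖ < 1) (n : ℕ) :
    qPoch a q n * qPochInf (a * q ^ n) q = qPochInf a q := by
  have hshift : (fun j => 1 - a * q ^ (j + n)) = fun j => 1 - a * q ^ n * q ^ j :=
    funext fun j => by ring
  have := Multipliable.prod_mul_tprod_nat_mul' (f := fun j => 1 - a * q ^ j) (k := n)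
    (by simpa only [hshift] using multipliable_one_sub_mul_pow hq)
  simpa only [hshift, qPoch, qPochInf] using this

lemma qPochInf_eq_one_sub_mul (hq : ‖q‖ < 1) : qPochInf a q = (1 - a) * qPochInf (a * q) q := by
  simpa [qPoch] using (qPoch_mul_qPochInf (a := a) hq 1).symm

lemma tendsto_qPochInf_mul_pow (hq : ‖q‖ < 1) (h : qPochInf a q ≠ 0) :
    Tendsto (fun n => qPochInf (a * q ^ n) q) atTop (𝓝 1) := by
  have hquot : ∀ n, qPochInf (a * q ^ n) q = qPochInf a q / qPoch a q n := fun n => by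
    have hprod := qPoch_mul_qPochInf (a := a) hq n
    have hn : qPoch a q n ≠ 0 := fun h0 => h (by rw [← hprod, h0, zero_mul])
    rw [eq_div_iff hn, mul_comm, hprod]
  simpa only [hquot, div_self h, Pi.div_def] using
    (tendsto_const_nhds (x := qPochInf a q)).div (tendsto_qPoch hq) h

end QPochhammer

noncomputable def pochTerm (q : ℂ) (n : ℕ) : ℂ :=
  qPochInf (q ^ (4 * n + 4)) (q ^ 4) * qPoch q q (2 * n + 1)

section PochTerm

variable {q : ℂ}

lemma pochTerm_succ_mul (hq : ‖q‖ < 1) (n : ℕ) :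
    pochTerm q (n + 1) * (1 + q ^ (2 * n + 2)) = pochTerm q n * (1 - q ^ (2 * n + 3)) := by
  have htail := qPochInf_eq_one_sub_mul (a := q ^ (4 * n + 4)) (norm_pow_lt_one hq four_ne_zero)
  rw [← pow_add] at htail
  rw [pochTerm, pochTerm, htail, show 2 * (n + 1) + 1 = 2 * n + 1 + 1 + 1 by ring,
    qPoch_succ, qPoch_succ, show 4 * (n + 1) + 4 = 4 * n + 4 + 4 by ring]
  ring

lemma one_add_pow_three_mul_pow_mul_pochTerm (hq : ‖q‖ < 1) (n : ℕ) :
    (1 + q ^ 3) * (q ^ (2 * n) * pochTerm q n) =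
      (1 + q ^ (2 * n)) * pochTerm q n - (1 + q ^ (2 * (n + 1))) * pochTerm q (n + 1) := by
  linear_combination pochTerm_succ_mul hq n

lemma tendsto_pochTerm (hq : ‖q‖ < 1) : Tendsto (pochTerm q) atTop (𝓝 (qPochInf q q)) := by
  have hq4 : ‖q ^ 4‖ < 1 := norm_pow_lt_one hq four_ne_zero
  have hexp (n : ℕ) : q ^ 4 * (q ^ 4) ^ n = q ^ (4 * n + 4) := by ring
  have htail : Tendsto (fun n => qPochInf (q ^ (4 * n + 4)) (q ^ 4)) atTop (𝓝 1) := by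
    simpa only [hexp] using tendsto_qPochInf_mul_pow hq4 (qPochInf_ne_zero hq4 hq4)
  have hfin : Tendsto (fun n => qPoch q q (2 * n + 1)) atTop (𝓝 (qPochInf q q)) :=
    (tendsto_qPoch hq).comp (tendsto_atTop_mono (fun n => show n ≤ 2 * n + 1 by omega) tendsto_id)
  rw [← one_mul (qPochInf q q)]
  exact htail.mul hfin

lemma hasSum_pow_mul_pochTerm (hq : ‖q‖ < 1) :
    HasSum (fun n => q ^ (2 * n) * pochTerm q n)
      ((2 * (1 - q) * qPochInf (q ^ 4) (q ^ 4) - qPochInf q q) / (1 + q ^ 3)) := by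
  have hq2 : ‖q ^ 2‖ < 1 := norm_pow_lt_one hq two_ne_zero
  have hsum : Summable fun n => q ^ (2 * n) * pochTerm q n := by
    simpa only [pow_mul] using summable_pow_mul_of_tendsto hq2 (tendsto_pochTerm hq)
  have hF : Tendsto (fun n => (1 + q ^ (2 * n)) * pochTerm q n) atTop (𝓝 (qPochInf q q)) := by
    simpa only [pow_mul, add_zero, one_mul] using
      ((tendsto_pow_atTop_nhds_zero_of_norm_lt_one hq2).const_add 1).mul (tendsto_pochTerm hq)
  have htel := (hsum.mul_left (1 + q ^ 3)).hasSum_of_eq_sub_succ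
    (F := fun n => (1 + q ^ (2 * n)) * pochTerm q n)
    (one_add_pow_three_mul_pow_mul_pochTerm hq) hF
  have hF0 : (1 + q ^ (2 * 0)) * pochTerm q 0 = 2 * (1 - q) * qPochInf (q ^ 4) (q ^ 4) := by
    simp only [pochTerm, qPoch, mul_zero, pow_zero, zero_add, range_one, prod_singleton, mul_one]
    ring
  have h3 : 1 + q ^ 3 ≠ 0 := fun h => by
    have := norm_pow_lt_one hq three_ne_zero
    rw [eq_neg_of_add_eq_zero_right h, norm_neg, norm_one] at this
    exact lt_irrefl 1 this
  rwa [← hasSum_mul_left_iff h3, mul_div_cancel₀ _ h3, ← hF0]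

end PochTerm

theorem stmt_2 (q : ℂ) (hq : ‖q‖ < 1) :
    ∑' n : ℕ, q ^ (2 * n) * qPochInf (q ^ (4 * n + 4)) (q ^ 4) * qPoch q q (2 * n + 1) =
      2 * (1 - q) * qPochInf (q ^ 4) (q ^ 4) / (1 + q ^ 3) - qPochInf q q / (1 + q ^ 3) := by
  simpa only [pochTerm, mul_assoc, sub_div] using (hasSum_pow_mul_pochTerm hq).tsum_eq
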